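/- Let ξ be irrational, and let I₁,…,I_L ⊂ ℝ/ℤ be disjoint intervals with I_ℓ = [a_ℓ, b_ℓ]. If there is a constant C > 0 with |D(N; I₁) + ⋯ + D(N; I_L)| < C for all N, then there exists a permutation σ of {1,…,L} and integers k_ℓ such that b_{σ(ℓ)} − a_ℓ ≡ k_ℓ ξ mod ℤ for all ℓ. -/

import Mathlib

open scoped Classical

/-- The local discrepancy of the orbit `x, x+ξ, ..., x+Nξ` (mod ℤ) with respect to
the interval `[a,b) ⊆ [0,1)` (viewed as an interval in ℝ/ℤ). -/
noncomputable def localDisc (ξ x a b : ℝ) (N : ℕ) : ℝ :=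
  (((Finset.range (N + 1)).filter
      (fun n => Int.fract (x + n * ξ) ∈ Set.Ico a b)).card : ℝ) - N * (b - a)

/-!
Let `ψ(t) = ∑ ℓ (𝟙[a ℓ, b ℓ)(t mod 1) - (b ℓ - a ℓ))`. Its Birkhoff sums along the rotation by `ξ`
starting at `x` are the summed discrepancies, hence bounded. Coding a point `u` by its itinerary
`(ψ(u + nξ))ₙ` turns the rotation into a shift on which `ψ` becomes the continuous coordinate
`y ↦ y 0`; the orbit closure of `x` consists of the itineraries of the points of the circle and
their left limits, and it is minimal because the forward orbits of an irrational rotation are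
dense. By the Gottschalk–Hedlund argument (a minimal closed invariant subset of the skew product
is the graph of a continuous function), `ψ` is a continuous coboundary on this orbit closure.
Evaluating the transfer function on left and on right itineraries, the jump `ψ(t⁻) - ψ(t)` of `ψ`
becomes a coboundary `J(t + ξ) - J(t)` where `J` has vanishing right limits. Along a coset
`e + ℤξ + ℤ`, `J` is constant on both tails, which are dense, so both tail values are `0` and the
jumps along the coset sum to `0`: each coset contains as many left endpoints `a ℓ` as right
endpoints `b ℓ`, and matching them yields `σ`.
-/

open Filter Topology Set Function

section MinimalSet

variable {X : Type*} [TopologicalSpace X]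

structure IsMinimalSet (f : X → X) (M : Set X) : Prop where
  nonempty : M.Nonempty
  isClosed : IsClosed M
  mapsTo : MapsTo f M M
  subset_of_subset : ∀ M' ⊆ M, M'.Nonempty → IsClosed M' → MapsTo f M' M' → M ⊆ M'

theorem exists_isMinimalSet_subset {f : X → X} {K : Set X} (hK : IsCompact K) (hKc : IsClosed K)
    (hne : K.Nonempty) (hf : MapsTo f K K) : ∃ M ⊆ K, IsMinimalSet f M := by
  let S := {M : Set X | M ⊆ K ∧ M.Nonempty ∧ IsClosed M ∧ MapsTo f M M}
  have hchain : ∀ c ⊆ S, IsChain (· ⊆ ·) c → c.Nonempty → ∃ lb ∈ S, ∀ M ∈ c, lb ⊆ M := by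
    intro c hcS hc ⟨M₀, hM₀⟩
    have : Nonempty c := ⟨⟨M₀, hM₀⟩⟩
    refine ⟨⋂₀ c, ⟨(sInter_subset_of_mem hM₀).trans (hcS hM₀).1, ?_, ?_, ?_⟩,
      fun M hM => sInter_subset_of_mem hM⟩
    · refine IsCompact.nonempty_sInter_of_directed_nonempty_isCompact_isClosed
        (fun M hM M' hM' => (hc.total hM hM').elim (fun h => ⟨M, hM, subset_rfl, h⟩)
          fun h => ⟨M', hM', h, subset_rfl⟩)
        (fun M hM => (hcS hM).2.1) (fun M hM => hK.of_isClosed_subset (hcS hM).2.2.1 (hcS hM).1)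
        fun M hM => (hcS hM).2.2.1
    · exact isClosed_sInter fun M hM => (hcS hM).2.2.1
    · exact fun p hp => mem_sInter.2 fun M hM => (hcS hM).2.2.2 (hp M hM)
  obtain ⟨M, -, hM⟩ := zorn_superset_nonempty S hchain K ⟨subset_rfl, hne, hKc, hf⟩
  obtain ⟨hMK, hMne, hMc, hMf⟩ := hM.prop
  exact ⟨M, hMK, hMne, hMc, hMf, fun M' hM' hne' hc' hf' =>
    hM.2 ⟨hM'.trans hMK, hne', hc', hf'⟩ hM'⟩

def orbitClosure (f : X → X) (x : X) : Set X := closure (range fun n => f^[n] x)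

theorem isClosed_orbitClosure (f : X → X) (x : X) : IsClosed (orbitClosure f x) :=
  isClosed_closure

theorem mem_orbitClosure (f : X → X) (x : X) : x ∈ orbitClosure f x := subset_closure ⟨0, rfl⟩

theorem mapsTo_orbitClosure {f : X → X} (hf : Continuous f) (x : X) :
    MapsTo f (orbitClosure f x) (orbitClosure f x) := by
  refine mapsTo_iff_image_subset.2 <| (image_closure_subset_closure_image hf).trans <|
    closure_mono ?_
  rintro _ ⟨_, ⟨n, rfl⟩, rfl⟩
  exact ⟨n + 1, iterate_succ_apply' f n x⟩

theorem orbitClosure_subset {f : X → X} {K : Set X} (hK : IsClosed K) (hf : MapsTo f K K)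
    {x : X} (hx : x ∈ K) : orbitClosure f x ⊆ K :=
  closure_minimal (range_subset_iff.2 fun n => hf.iterate n hx) hK

theorem continuousOn_of_closed_graph {Z : Type*} [TopologicalSpace Z] {M : Set (X × Z)}
    (hM : IsClosed M) {K : Set Z} (hK : IsCompact K) {s : Set X} {γ : X → Z}
    (hγK : MapsTo γ s K) (hγM : ∀ y ∈ s, (y, γ y) ∈ M)
    (huniq : ∀ y ∈ s, ∀ z, (y, z) ∈ M → z = γ y) : ContinuousOn γ s := by
  intro y hy
  refine hK.tendsto_nhds_of_unique_mapClusterPt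
    (eventually_nhdsWithin_of_forall fun z hz => hγK hz) fun ρ _ hρ => huniq y hy ρ ?_
  refine hM.closure_subset (mem_closure_iff_nhds.2 fun U hU => ?_)
  obtain ⟨U₁, hU₁, U₂, hU₂, hU⟩ := mem_nhds_prod_iff.1 hU
  obtain ⟨z, hzU₂, hzU₁, hzs⟩ := ((mapClusterPt_iff_frequently.1 hρ U₂ hU₂).and_eventually
    (inter_mem (mem_nhdsWithin_of_mem_nhds hU₁) self_mem_nhdsWithin)).exists
  exact ⟨(z, γ z), hU ⟨hzU₁, hzU₂⟩, hγM z hzs⟩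

end MinimalSet

section SkewProduct

variable {X : Type*} {T : X → X} {φ : X → ℝ}

def skewProduct (T : X → X) (φ : X → ℝ) (p : X × ℝ) : X × ℝ := (T p.1, p.2 + φ p.1)

theorem skewProduct_iterate (n : ℕ) (p : X × ℝ) :
    (skewProduct T φ)^[n] p = (T^[n] p.1, p.2 + birkhoffSum T φ n p.1) := by
  induction n with
  | zero => simp
  | succ n ih => simp [iterate_succ_apply', ih, skewProduct, birkhoffSum_succ, add_assoc]

variable [TopologicalSpace X]

theorem continuous_skewProduct (hT : Continuous T) (hφ : Continuous φ) :
    Continuous (skewProduct T φ) :=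
  (hT.comp continuous_fst).prodMk (continuous_snd.add (hφ.comp continuous_fst))

/-- Translating the fibre commutes with the skew product, so minimality forces a minimal set with
two points in one fibre to be invariant under the translation by their difference. -/
theorem IsMinimalSet.subsingleton_fiber {M : Set (X × ℝ)} (hM : IsMinimalSet (skewProduct T φ) M)
    {B : ℝ} (hB : ∀ p ∈ M, |p.2| ≤ B) (y : X) : {r | (y, r) ∈ M}.Subsingleton := by
  intro r hr r' hr'
  set τ : X × ℝ → X × ℝ := fun p => (p.1, p.2 + (r' - r))
  have hτM : MapsTo τ M M := by
    refine fun p hp => (hM.subset_of_subset (M ∩ τ ⁻¹' M) inter_subset_left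
      ⟨(y, r), hr, ?_⟩ (hM.isClosed.inter (hM.isClosed.preimage (by fun_prop))) ?_ hp).2
    · simpa [τ] using hr'
    · exact fun q hq => ⟨hM.mapsTo hq.1,
        by simpa [τ, skewProduct, add_right_comm] using hM.mapsTo hq.2⟩
  have hiter : ∀ n : ℕ, (y, r + n * (r' - r)) ∈ M := by
    intro n
    induction n with
    | zero => simpa using hr
    | succ n ih => simpa [τ, add_mul, add_assoc] using hτM ih
  by_contra hne
  obtain ⟨n, hn⟩ := exists_nat_gt ((B + |r|) / |r' - r|)
  have hpos : 0 < |r' - r| := abs_pos.2 (sub_ne_zero.2 (Ne.symm hne))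
  have hgrowth : (n : ℝ) * |r' - r| ≤ |r + n * (r' - r)| + |r| :=
    calc (n : ℝ) * |r' - r| = |r + n * (r' - r) - r| := by
          rw [add_sub_cancel_left, abs_mul, Nat.abs_cast]
      _ ≤ _ := abs_sub _ _
  rw [div_lt_iff₀ hpos] at hn
  linarith [hB _ (hiter n)]

theorem exists_continuousOn_coboundary [T2Space X] (hT : Continuous T) (hφ : Continuous φ)
    {x₀ : X} (hcpt : IsCompact (orbitClosure T x₀)) (hmin : IsMinimalSet T (orbitClosure T x₀))
    {B : ℝ} (hB : ∀ n, |birkhoffSum T φ n x₀| ≤ B) :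
    ∃ γ : X → ℝ, ContinuousOn γ (orbitClosure T x₀) ∧
      ∀ y ∈ orbitClosure T x₀, γ (T y) = γ y + φ y := by
  set Y := orbitClosure T x₀
  set Z := orbitClosure (skewProduct T φ) (x₀, 0)
  have hZ : Z ⊆ Y ×ˢ Icc (-B) B := by
    refine closure_minimal (range_subset_iff.2 fun n => ?_) (isClosed_closure.prod isClosed_Icc)
    rw [skewProduct_iterate, zero_add]
    exact ⟨subset_closure ⟨n, rfl⟩, abs_le.1 (hB n)⟩
  have hYB : IsCompact (Y ×ˢ Icc (-B) B) := hcpt.prod isCompact_Icc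
  obtain ⟨M, hMZ, hM⟩ := exists_isMinimalSet_subset (hYB.of_isClosed_subset isClosed_closure hZ)
    isClosed_closure ⟨_, mem_orbitClosure _ _⟩
    (mapsTo_orbitClosure (continuous_skewProduct hT hφ) _)
  have hMY : M ⊆ Y ×ˢ Icc (-B) B := hMZ.trans hZ
  have hfiber := hM.subsingleton_fiber fun p hp => abs_le.2 (hMY hp).2
  have hproj : Y ⊆ Prod.fst '' M := by
    refine hmin.subset_of_subset _ ((image_mono hMY).trans (fst_image_prod_subset _ _))
      (hM.nonempty.image _)
      (((hYB.of_isClosed_subset hM.isClosed hMY).image continuous_fst).isClosed) ?_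
    rintro _ ⟨p, hp, rfl⟩
    exact ⟨_, hM.mapsTo hp, rfl⟩
  have hex : ∀ y ∈ Y, ∃ r, (y, r) ∈ M := fun y hy => by
    obtain ⟨p, hp, rfl⟩ := hproj hy
    exact ⟨p.2, hp⟩
  set γ : X → ℝ := fun y => if h : ∃ r, (y, r) ∈ M then h.choose else 0
  have hγM : ∀ y ∈ Y, (y, γ y) ∈ M := fun y hy => by
    simpa only [γ, dif_pos (hex y hy)] using (hex y hy).choose_spec
  refine ⟨γ, continuousOn_of_closed_graph hM.isClosed isCompact_Icc
    (fun y hy => (hMY (hγM y hy)).2) hγM fun y hy z hz => hfiber _ hz (hγM y hy) , fun y hy => ?_⟩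
  exact hfiber _ (hγM _ (hmin.mapsTo hy)) (hM.mapsTo (hγM y hy))

end SkewProduct

section Density

variable {ξ : ℝ}

def liftedOrbit (ξ u : ℝ) (N₀ : ℕ) : Set ℝ := {t | ∃ n : ℕ, N₀ ≤ n ∧ ∃ m : ℤ, t = u + n * ξ + m}

theorem dense_liftedOrbit (hξ : Irrational ξ) (u : ℝ) (N₀ : ℕ) : Dense (liftedOrbit ξ u N₀) := by
  refine dense_of_exists_between fun a b hab => ?_
  have hdense : DenseRange (· • (ξ : AddCircle (1 : ℝ)) : ℤ → AddCircle (1 : ℝ)) :=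
    AddCircle.denseRange_zsmul_coe_iff.2 (by simpa using hξ)
  have hcl : MapClusterPt (((a + b) / 2 - u : ℝ) : AddCircle (1 : ℝ)) atTop
      (· • (ξ : AddCircle (1 : ℝ)) : ℕ → AddCircle (1 : ℝ)) :=
    mapClusterPt_atTop_nsmul_iff_mem_topologicalClosure_zmultiples.2 (hdense _)
  have hU : ((↑) : ℝ → AddCircle (1 : ℝ)) '' Ioo (a - u) (b - u) ∈
      𝓝 (((a + b) / 2 - u : ℝ) : AddCircle (1 : ℝ)) :=
    QuotientAddGroup.isOpenMap_coe.image_mem_nhds (Ioo_mem_nhds (by linarith) (by linarith))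
  obtain ⟨n, ⟨s, hs, hsn⟩, hn⟩ := ((mapClusterPt_iff_frequently.1 hcl _ hU).and_eventually
    (eventually_ge_atTop N₀)).exists
  rw [← AddCircle.coe_nsmul, nsmul_eq_mul, QuotientAddGroup.eq,
    AddSubgroup.mem_zmultiples_iff] at hsn
  obtain ⟨m, hm⟩ := hsn
  refine ⟨u + s, ⟨n, hn, -m, ?_⟩, by linarith [hs.1], by linarith [hs.2]⟩
  simp only [zsmul_eq_mul, mul_one] at hm
  push_cast
  linarith

theorem frequently_nhdsGT_liftedOrbit (hξ : Irrational ξ) (u : ℝ) (N₀ : ℕ) (w : ℝ) :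
    ∃ᶠ t in 𝓝[>] w, t ∈ liftedOrbit ξ u N₀ := by
  refine frequently_iff.2 fun hU => ?_
  obtain ⟨b, hb, hbU⟩ := mem_nhdsGT_iff_exists_Ioo_subset.1 hU
  obtain ⟨t, ht, hwt, htb⟩ := (dense_liftedOrbit hξ u N₀).exists_between hb
  exact ⟨t, hbU ⟨hwt, htb⟩, ht⟩

theorem frequently_nhdsLT_liftedOrbit (hξ : Irrational ξ) (u : ℝ) (N₀ : ℕ) (w : ℝ) :
    ∃ᶠ t in 𝓝[<] w, t ∈ liftedOrbit ξ u N₀ := by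
  refine frequently_iff.2 fun hU => ?_
  obtain ⟨b, hb, hbU⟩ := mem_nhdsLT_iff_exists_Ioo_subset.1 hU
  obtain ⟨t, ht, hbt, htw⟩ := (dense_liftedOrbit hξ u N₀).exists_between hb
  exact ⟨t, hbU ⟨hbt, htw⟩, ht⟩

end Density

theorem exists_eq_or_eq_of_mem_closure_image {Z : Type*} [TopologicalSpace Z] [T2Space Z]
    {f g : ℝ → Z} (hf : ∀ u, Tendsto f (𝓝[≥] u) (𝓝 (f u)))
    (hg : ∀ u, Tendsto f (𝓝[<] u) (𝓝 (g u))) {s : Set ℝ} (hs : IsCompact s) {y : Z}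
    (hy : y ∈ closure (f '' s)) : ∃ u, y = f u ∨ y = g u := by
  rw [mem_closure_iff_clusterPt, ← map_principal, ClusterPt, inf_comm,
    ← neBot_inf_comap_iff_map] at hy
  obtain ⟨u, -, hu⟩ := hs.exists_clusterPt (f := 𝓟 s ⊓ comap f (𝓝 y)) inf_le_left
  have hne : (𝓝 u ⊓ comap f (𝓝 y)).NeBot := hu.neBot.mono (inf_le_inf_left _ inf_le_right)
  rw [← nhdsLT_sup_nhdsGE, inf_sup_right, sup_neBot] at hne
  refine ⟨u, hne.symm.imp (fun h => ?_) fun h => ?_⟩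
  · exact tendsto_nhds_unique' h (tendsto_comap.mono_left inf_le_right)
      ((hf u).mono_left inf_le_left)
  · exact tendsto_nhds_unique' h (tendsto_comap.mono_left inf_le_right)
      ((hg u).mono_left inf_le_left)

def seqShift {α : Type*} (y : ℕ → α) : ℕ → α := fun n => y (n + 1)

theorem continuous_seqShift {α : Type*} [TopologicalSpace α] : Continuous (seqShift (α := α)) :=
  continuous_pi fun n => continuous_apply (n + 1)

section Itinerary

variable {ξ : ℝ} {F G : ℝ → ℝ}

def itinerary (F : ℝ → ℝ) (ξ u : ℝ) : ℕ → ℝ := fun n => F (u + n * ξ)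

theorem seqShift_iterate_itinerary (n : ℕ) (u : ℝ) :
    seqShift^[n] (itinerary F ξ u) = itinerary F ξ (u + n * ξ) := by
  induction n generalizing u with
  | zero => simp
  | succ n ih =>
    rw [iterate_succ_apply', ih]
    funext k
    simp only [seqShift, itinerary]
    push_cast
    ring_nf

theorem seqShift_itinerary (u : ℝ) : seqShift (itinerary F ξ u) = itinerary F ξ (u + ξ) := by
  simpa using seqShift_iterate_itinerary (F := F) (ξ := ξ) 1 u

theorem periodic_itinerary (hF : Periodic F 1) : Periodic (itinerary F ξ) 1 := fun u => by
  funext n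
  simp only [itinerary, add_right_comm u 1, hF _]

theorem birkhoffSum_itinerary (n : ℕ) (u : ℝ) :
    birkhoffSum seqShift (fun y => y 0) n (itinerary F ξ u) =
      ∑ k ∈ Finset.range n, F (u + k * ξ) := by
  simp [birkhoffSum, seqShift_iterate_itinerary, itinerary]

theorem tendsto_itinerary {s : ℝ → Set ℝ} (hs : ∀ w c, MapsTo (· + c) (s w) (s (w + c)))
    (h : ∀ w, ∀ᶠ t in 𝓝[s w] w, F t = G w) (w : ℝ) :
    Tendsto (itinerary F ξ) (𝓝[s w] w) (𝓝 (itinerary G ξ w)) := by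
  refine tendsto_pi_nhds.2 fun n => tendsto_const_nhds.congr' ?_
  have hshift := ((continuous_add_const (n * ξ)).continuousWithinAt (x := w)).tendsto_nhdsWithin
    (hs w (n * ξ))
  exact (hshift.eventually (h _)).mono fun t ht => ht.symm

theorem mem_of_tendsto_itinerary (hG : Periodic G 1) {K : Set (ℕ → ℝ)} (hK : IsClosed K)
    (hKinv : MapsTo seqShift K K) {u : ℝ} (hu : itinerary G ξ u ∈ K) {l : Filter ℝ}
    (hl : ∃ᶠ t in l, t ∈ liftedOrbit ξ u 0) {y : ℕ → ℝ} (h : Tendsto (itinerary G ξ) l (𝓝 y)) :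
    y ∈ K := by
  refine hK.mem_of_frequently_of_tendsto (hl.mono ?_) h
  rintro t ⟨n, -, m, rfl⟩
  rw [← mul_one (m : ℝ), (periodic_itinerary hG).int_mul m, ← seqShift_iterate_itinerary]
  exact hKinv.iterate n hu

end Itinerary

/-- `F` is a bounded `1`-periodic step function, continuous from the right, and `FL` is its function
of left limits. -/
structure IsPeriodicStep (F FL : ℝ → ℝ) : Prop where
  periodic : Periodic F 1
  periodic_left : Periodic FL 1
  bounded : ∃ R, ∀ t, |F t| ≤ R
  eventually_nhdsGE : ∀ w, ∀ᶠ t in 𝓝[≥] w, F t = F w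
  eventually_nhdsGT_left : ∀ w, ∀ᶠ t in 𝓝[>] w, FL t = F w
  eventually_nhdsLT : ∀ w, ∀ᶠ t in 𝓝[<] w, F t = FL w

namespace IsPeriodicStep

variable {ξ : ℝ} {F FL : ℝ → ℝ}

theorem tendsto_itinerary_nhdsGE (h : IsPeriodicStep F FL) (w : ℝ) :
    Tendsto (itinerary F ξ) (𝓝[≥] w) (𝓝 (itinerary F ξ w)) :=
  tendsto_itinerary (s := Ici) (fun _ _ _ ht => by simpa using ht) h.eventually_nhdsGE w

theorem tendsto_itinerary_nhdsGT (h : IsPeriodicStep F FL) (w : ℝ) :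
    Tendsto (itinerary F ξ) (𝓝[>] w) (𝓝 (itinerary F ξ w)) :=
  (h.tendsto_itinerary_nhdsGE w).mono_left (nhdsWithin_mono _ Ioi_subset_Ici_self)

theorem tendsto_itinerary_left_nhdsGT (h : IsPeriodicStep F FL) (w : ℝ) :
    Tendsto (itinerary FL ξ) (𝓝[>] w) (𝓝 (itinerary F ξ w)) :=
  tendsto_itinerary (s := Ioi) (fun _ _ _ ht => by simpa using ht) h.eventually_nhdsGT_left w

theorem tendsto_itinerary_nhdsLT (h : IsPeriodicStep F FL) (w : ℝ) :
    Tendsto (itinerary F ξ) (𝓝[<] w) (𝓝 (itinerary FL ξ w)) :=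
  tendsto_itinerary (s := Iio) (fun _ _ _ ht => by simpa using ht) h.eventually_nhdsLT w

theorem itinerary_mem_orbitClosure (h : IsPeriodicStep F FL) (hξ : Irrational ξ) (x u : ℝ) :
    itinerary F ξ u ∈ orbitClosure seqShift (itinerary F ξ x) :=
  mem_of_tendsto_itinerary h.periodic (isClosed_orbitClosure _ _)
    (mapsTo_orbitClosure continuous_seqShift _) (mem_orbitClosure _ _)
    (frequently_nhdsGT_liftedOrbit hξ x 0 u) (h.tendsto_itinerary_nhdsGT u)

theorem itinerary_left_mem_orbitClosure (h : IsPeriodicStep F FL) (hξ : Irrational ξ)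
    (x u : ℝ) : itinerary FL ξ u ∈ orbitClosure seqShift (itinerary F ξ x) :=
  mem_of_tendsto_itinerary h.periodic (isClosed_orbitClosure _ _)
    (mapsTo_orbitClosure continuous_seqShift _) (mem_orbitClosure _ _)
    (frequently_nhdsLT_liftedOrbit hξ x 0 u) (h.tendsto_itinerary_nhdsLT u)

theorem isCompact_orbitClosure (h : IsPeriodicStep F FL) (x : ℝ) :
    IsCompact (orbitClosure seqShift (itinerary F ξ x)) := by
  obtain ⟨R, hR⟩ := h.bounded
  refine (isCompact_univ_pi fun _ => isCompact_Icc (a := -R) (b := R)).of_isClosed_subset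
    (isClosed_orbitClosure _ _) (closure_minimal (range_subset_iff.2 fun n k _ => ?_)
      (isClosed_set_pi fun _ _ => isClosed_Icc))
  rw [seqShift_iterate_itinerary]
  exact abs_le.1 (hR _)

theorem isMinimalSet_orbitClosure (h : IsPeriodicStep F FL) (hξ : Irrational ξ) (x : ℝ) :
    IsMinimalSet seqShift (orbitClosure seqShift (itinerary F ξ x)) := by
  refine ⟨⟨_, mem_orbitClosure _ _⟩, isClosed_orbitClosure _ _,
    mapsTo_orbitClosure continuous_seqShift _, fun K hKY ⟨y, hyK⟩ hKc hKinv => ?_⟩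
  refine orbitClosure_subset hKc hKinv ?_
  have hYsub : orbitClosure seqShift (itinerary F ξ x) ⊆ closure (itinerary F ξ '' Icc 0 1) := by
    refine closure_mono (range_subset_iff.2 fun n => ⟨Int.fract (x + n * ξ),
      ⟨Int.fract_nonneg _, (Int.fract_lt_one _).le⟩, ?_⟩)
    rw [seqShift_iterate_itinerary, Int.fract, sub_eq_add_neg, ← Int.cast_neg,
      ← mul_one ((-_ : ℤ) : ℝ), (periodic_itinerary h.periodic).int_mul]
  obtain ⟨u, rfl | rfl⟩ := exists_eq_or_eq_of_mem_closure_image h.tendsto_itinerary_nhdsGE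
    h.tendsto_itinerary_nhdsLT isCompact_Icc (hYsub (hKY hyK))
  · exact mem_of_tendsto_itinerary h.periodic hKc hKinv hyK
      (frequently_nhdsGT_liftedOrbit hξ u 0 x) (h.tendsto_itinerary_nhdsGT x)
  · exact mem_of_tendsto_itinerary h.periodic_left hKc hKinv hyK
      (frequently_nhdsGT_liftedOrbit hξ u 0 x) (h.tendsto_itinerary_left_nhdsGT x)

theorem exists_jump_eq_coboundary (h : IsPeriodicStep F FL) (hξ : Irrational ξ) {x B : ℝ}
    (hB : ∀ n, |∑ k ∈ Finset.range n, F (x + k * ξ)| ≤ B) :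
    ∃ J : ℝ → ℝ, Periodic J 1 ∧ (∀ u, J (u + ξ) = J u + (FL u - F u)) ∧
      ∀ w, Tendsto J (𝓝[>] w) (𝓝 0) := by
  obtain ⟨γ, hγc, hγ⟩ := exists_continuousOn_coboundary continuous_seqShift (continuous_apply 0)
    (h.isCompact_orbitClosure x) (h.isMinimalSet_orbitClosure hξ x)
    fun n => (birkhoffSum_itinerary n x).symm ▸ hB n
  have hF := h.itinerary_mem_orbitClosure hξ x
  have hFL := h.itinerary_left_mem_orbitClosure hξ x
  refine ⟨fun u => γ (itinerary FL ξ u) - γ (itinerary F ξ u), fun u => ?_, fun u => ?_,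
    fun w => ?_⟩
  · simp only [periodic_itinerary h.periodic u, periodic_itinerary h.periodic_left u]
  · simp only [← seqShift_itinerary, hγ _ (hF u), hγ _ (hFL u), itinerary]
    ring_nf
  · have hγF := hγc _ (hF w)
    simpa using (hγF.tendsto.comp (tendsto_nhdsWithin_iff.2
      ⟨h.tendsto_itinerary_left_nhdsGT w, Eventually.of_forall hFL⟩)).sub
      (hγF.tendsto.comp (tendsto_nhdsWithin_iff.2
        ⟨h.tendsto_itinerary_nhdsGT w, Eventually.of_forall hF⟩))

end IsPeriodicStep

section Cosets
variable {ξ : ℝ}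

theorem eq_zero_of_eq_on_orbit_tail (hξ : Irrational ξ) {J : ℝ → ℝ} (hJ : Periodic J 1) {w : ℝ}
    (hlim : Tendsto J (𝓝[>] w) (𝓝 0)) {u c : ℝ} {N₀ : ℕ}
    (hc : ∀ n : ℕ, N₀ ≤ n → J (u + n * ξ) = c) : c = 0 := by
  refine tendsto_nhds_unique_of_frequently_eq tendsto_const_nhds hlim
    ((frequently_nhdsGT_liftedOrbit hξ u N₀ w).mono ?_)
  rintro t ⟨n, hn, m, rfl⟩
  rw [← mul_one (m : ℝ), hJ.int_mul m, hc n hn]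

theorem sum_range_eq_zero_of_cocycle (hξ : Irrational ξ) {J D : ℝ → ℝ} (hJper : Periodic J 1)
    (hJ : ∀ u, J (u + ξ) = J u + D u) (hlim : ∀ w, Tendsto J (𝓝[>] w) (𝓝 0)) (e : ℝ) (n : ℕ)
    (hD : ∀ k : ℤ, k < 0 ∨ n ≤ k → D (e + k * ξ) = 0) :
    ∑ i ∈ Finset.range n, D (e + i * ξ) = 0 := by
  have htel : ∑ i ∈ Finset.range n, D (e + i * ξ) = J (e + n * ξ) - J e := by
    have := Finset.sum_range_sub (fun i : ℕ => J (e + i * ξ)) n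
    rw [Nat.cast_zero, zero_mul, add_zero] at this
    rw [← this]
    refine Finset.sum_congr rfl fun i _ => ?_
    rw [Nat.cast_succ, add_one_mul, ← add_assoc, hJ]
    ring
  have hfwd : ∀ m : ℕ, n ≤ m → J (e + m * ξ) = J (e + n * ξ) := by
    refine fun m hm => Nat.le_induction rfl (fun m hm ih => ?_) m hm
    have h0 : D (e + m * ξ) = 0 := by exact_mod_cast hD m (Or.inr (by exact_mod_cast hm))
    rw [Nat.cast_succ, add_one_mul, ← add_assoc, hJ, ih, h0, add_zero]
  have hbwd : ∀ m : ℕ, J (e + m * -ξ) = J e := by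
    intro m
    induction m with
    | zero => simp
    | succ m ih =>
      have h0 : D (e + (m + 1 : ℕ) * -ξ) = 0 := by
        convert hD (-(m + 1 : ℕ)) (Or.inl (by omega)) using 2
        push_cast
        ring
      have hstep : e + ((m + 1 : ℕ) : ℝ) * -ξ + ξ = e + m * -ξ := by
        push_cast
        ring
      have := hJ (e + (m + 1 : ℕ) * -ξ)
      rw [h0, add_zero, hstep, ih] at this
      exact this.symm
  rw [htel, eq_zero_of_eq_on_orbit_tail hξ hJper (hlim 0) hfwd,
    eq_zero_of_eq_on_orbit_tail hξ.neg hJper (hlim 0) (N₀ := 0) fun m _ => hbwd m, sub_zero]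

theorem eq_of_add_mul_sub_mem_range (hξ : Irrational ξ) {e c : ℝ} {k k' : ℤ}
    (hk : e + k * ξ - c ∈ range ((↑) : ℤ → ℝ)) (hk' : e + k' * ξ - c ∈ range ((↑) : ℤ → ℝ)) :
    k = k' := by
  obtain ⟨m, hm⟩ := hk
  obtain ⟨m', hm'⟩ := hk'
  by_contra hne
  refine (hξ.intCast_mul (sub_ne_zero.2 hne)).ne_int (m - m') ?_
  push_cast
  linarith

theorem mk_eq_mk_iff_exists_int (c e : ℝ) :
    ((c : ℝ ⧸ AddSubgroup.closure {ξ, 1}) = e) ↔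
      ∃ k : ℤ, e + k * ξ - c ∈ range ((↑) : ℤ → ℝ) := by
  rw [QuotientAddGroup.eq, AddSubgroup.mem_closure_pair]
  constructor
  · rintro ⟨k, m, h⟩
    refine ⟨-k, m, ?_⟩
    simp only [zsmul_eq_mul, mul_one] at h
    push_cast
    linarith
  · rintro ⟨k, m, h⟩
    refine ⟨-k, m, ?_⟩
    simp only [zsmul_eq_mul, mul_one]
    push_cast
    linarith

theorem exists_coset_window (hξ : Irrational ξ) {s : Set ℝ} (hs : s.Finite) (e : ℝ) :
    ∃ e' : ℝ, ∃ n : ℕ, ((e' : ℝ ⧸ AddSubgroup.closure {ξ, 1}) = e) ∧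
      ∀ c ∈ s, ∀ k : ℤ, e' + k * ξ - c ∈ range ((↑) : ℤ → ℝ) → 0 ≤ k ∧ k < n := by
  have hfin : {k : ℤ | ∃ c ∈ s, e + k * ξ - c ∈ range ((↑) : ℤ → ℝ)}.Finite := by
    convert hs.biUnion fun c _ =>
      Set.Subsingleton.finite (s := {k : ℤ | e + k * ξ - c ∈ range ((↑) : ℤ → ℝ)})
        fun k hk k' hk' => eq_of_add_mul_sub_mem_range hξ hk hk'
    ext k
    simp
  obtain ⟨k₀, hk₀⟩ := hfin.bddBelow
  obtain ⟨K, hK⟩ := hfin.bddAbove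
  refine ⟨e + k₀ * ξ, (K - k₀ + 1).toNat, (mk_eq_mk_iff_exists_int _ _).2 ⟨k₀, 0, by ring⟩,
    fun c hc k hk => ?_⟩
  have hmem : k + k₀ ∈ {k : ℤ | ∃ c ∈ s, e + k * ξ - c ∈ range ((↑) : ℤ → ℝ)} :=
    ⟨c, hc, by convert hk using 1; push_cast; ring⟩
  have := hk₀ hmem
  have := hK hmem
  omega

theorem sum_range_indicator_eq (hξ : Irrational ξ) {e c : ℝ} {n : ℕ}
    (h : ∀ k : ℤ, e + k * ξ - c ∈ range ((↑) : ℤ → ℝ) → 0 ≤ k ∧ k < n) :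
    ∑ i ∈ Finset.range n, (if e + i * ξ - c ∈ range ((↑) : ℤ → ℝ) then (1 : ℝ) else 0) =
      if (c : ℝ ⧸ AddSubgroup.closure {ξ, 1}) = e then 1 else 0 := by
  rw [Finset.sum_boole]
  by_cases hce : ∃ k : ℤ, e + k * ξ - c ∈ range ((↑) : ℤ → ℝ)
  · rw [if_pos ((mk_eq_mk_iff_exists_int c e).2 hce)]
    obtain ⟨k, hk⟩ := hce
    obtain ⟨hk0, hkn⟩ := h k hk
    rw [Nat.cast_eq_one, Finset.card_eq_one]
    refine ⟨k.toNat, Finset.ext fun i => ?_⟩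
    have hcast : ((k.toNat : ℕ) : ℝ) = k := by exact_mod_cast Int.toNat_of_nonneg hk0
    simp only [Finset.mem_filter, Finset.mem_range, Finset.mem_singleton]
    constructor
    · rintro ⟨-, hi⟩
      have := eq_of_add_mul_sub_mem_range hξ (k := i) (by exact_mod_cast hi) hk
      omega
    · rintro rfl
      exact ⟨by omega, hcast ▸ hk⟩
  · rw [if_neg (mt (mk_eq_mk_iff_exists_int c e).1 hce), Nat.cast_eq_zero, Finset.card_eq_zero,
      Finset.filter_eq_empty_iff]
    exact fun i _ hi => hce ⟨i, by exact_mod_cast hi⟩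

end Cosets

section Floor

theorem eventually_floor_sub_nhdsGE (c w : ℝ) : ∀ᶠ t in 𝓝[≥] w, ⌊t - c⌋ = ⌊w - c⌋ := by
  filter_upwards [Ico_mem_nhdsGE (by linarith [Int.lt_floor_add_one (w - c)] :
    w < w + (⌊w - c⌋ + 1 - (w - c)))] with t ht
  rw [Int.floor_eq_iff]
  constructor <;> linarith [ht.1, ht.2, Int.floor_le (w - c)]

theorem eventually_ceil_sub_nhdsGT (c w : ℝ) : ∀ᶠ t in 𝓝[>] w, ⌈t - c⌉ = ⌊w - c⌋ + 1 := by
  filter_upwards [Ioo_mem_nhdsGT (by linarith [Int.lt_floor_add_one (w - c)] :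
    w < w + (⌊w - c⌋ + 1 - (w - c)))] with t ht
  rw [Int.ceil_eq_iff]
  push_cast
  constructor <;> linarith [ht.1, ht.2, Int.floor_le (w - c)]

theorem eventually_floor_sub_nhdsLT (c w : ℝ) : ∀ᶠ t in 𝓝[<] w, ⌊t - c⌋ = ⌈w - c⌉ - 1 := by
  filter_upwards [Ioo_mem_nhdsLT (by linarith [Int.ceil_lt_add_one (w - c)] :
    w - (w - c - (⌈w - c⌉ - 1)) < w)] with t ht
  rw [Int.floor_eq_iff]
  push_cast
  constructor <;> linarith [ht.1, ht.2, Int.le_ceil (w - c)]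

theorem ceil_sub_floor_eq (x : ℝ) :
    (⌈x⌉ : ℝ) - ⌊x⌋ = 1 - if x ∈ range ((↑) : ℤ → ℝ) then 1 else 0 := by
  split_ifs with hx
  · rw [(Int.ceil_eq_self_iff_mem x).2 hx, (Int.floor_eq_self_iff_mem x).2 hx]
    ring
  · rw [(Int.ceil_eq_floor_add_one_iff_notMem x).2 hx]
    push_cast
    ring

theorem floor_sub_eq (t : ℝ) {c : ℝ} (hc₀ : 0 ≤ c) (hc₁ : c ≤ 1) :
    ⌊t - c⌋ = ⌊t⌋ - if Int.fract t < c then 1 else 0 := by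
  rw [Int.floor_eq_iff]
  have := Int.fract_nonneg t
  have := Int.fract_lt_one t
  have := Int.self_sub_floor t
  split_ifs <;> push_cast <;> constructor <;> linarith

theorem floor_sub_sub_floor_sub {c d : ℝ} (hc : 0 ≤ c) (hcd : c ≤ d) (hd : d ≤ 1) (t : ℝ) :
    (⌊t - c⌋ : ℝ) - ⌊t - d⌋ = if Int.fract t ∈ Ico c d then 1 else 0 := by
  rw [floor_sub_eq t hc (hcd.trans hd), floor_sub_eq t (hc.trans hcd) hd]
  by_cases h₁ : Int.fract t < c <;> by_cases h₂ : Int.fract t < d <;>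
    simp [h₁, h₂]
  exact h₂ (h₁.trans_le hcd)

end Floor

-- Lean elaborates the index `n` of `localDisc` as a real number, filtering the image of
-- `Finset.range (N + 1)` in `ℝ`.
theorem localDisc_eq (ξ x a b : ℝ) (N : ℕ) : localDisc ξ x a b N =
    ((Finset.range (N + 1)).filter (fun n : ℕ => Int.fract (x + n * ξ) ∈ Ico a b)).card
      - N * (b - a) := by
  simp only [localDisc, Finset.pure_def, Finset.bind_def, Finset.sup_singleton_apply,
    Finset.filter_image, Finset.card_image_of_injective _ Nat.cast_injective]

section DiscrepancyFun

variable {ι : Type*} [Fintype ι] (a b : ι → ℝ)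

-- For `0 ≤ a ≤ b ≤ 1`, `⌊t - a⌋ - ⌊t - b⌋` is the indicator of `[a, b) + ℤ`; replacing floors by
-- ceilings gives its left limits.
noncomputable def discrepancyFun (t : ℝ) : ℝ := ∑ i, ((⌊t - a i⌋ : ℝ) - ⌊t - b i⌋ - (b i - a i))

noncomputable def discrepancyFunLeft (t : ℝ) : ℝ :=
  ∑ i, ((⌈t - a i⌉ : ℝ) - ⌈t - b i⌉ - (b i - a i))

theorem isPeriodicStep_discrepancyFun :
    IsPeriodicStep (discrepancyFun a b) (discrepancyFunLeft a b) where
  periodic t := by simp [discrepancyFun, add_sub_right_comm t 1]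
  periodic_left t := by simp [discrepancyFunLeft, add_sub_right_comm t 1]
  bounded := by
    refine ⟨Fintype.card ι, fun t => ?_⟩
    refine (Finset.abs_sum_le_sum_abs _ _).trans ?_
    refine (Finset.sum_le_card_nsmul _ _ 1 fun i _ => ?_).trans (by simp)
    have hfract : (⌊t - a i⌋ : ℝ) - ⌊t - b i⌋ - (b i - a i) =
        Int.fract (t - b i) - Int.fract (t - a i) := by
      simp only [Int.fract]
      ring
    rw [hfract, abs_le]
    constructor <;> linarith [Int.fract_nonneg (t - a i), Int.fract_lt_one (t - a i),
      Int.fract_nonneg (t - b i), Int.fract_lt_one (t - b i)]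
  eventually_nhdsGE w := by
    filter_upwards [eventually_all.2 fun i => eventually_floor_sub_nhdsGE (a i) w,
      eventually_all.2 fun i => eventually_floor_sub_nhdsGE (b i) w] with t ha hb
    simp [discrepancyFun, ha, hb]
  eventually_nhdsGT_left w := by
    filter_upwards [eventually_all.2 fun i => eventually_ceil_sub_nhdsGT (a i) w,
      eventually_all.2 fun i => eventually_ceil_sub_nhdsGT (b i) w] with t ha hb
    simp [discrepancyFun, discrepancyFunLeft, ha, hb]
  eventually_nhdsLT w := by
    filter_upwards [eventually_all.2 fun i => eventually_floor_sub_nhdsLT (a i) w,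
      eventually_all.2 fun i => eventually_floor_sub_nhdsLT (b i) w] with t ha hb
    simp [discrepancyFun, discrepancyFunLeft, ha, hb]

theorem discrepancyFunLeft_sub_discrepancyFun (t : ℝ) :
    discrepancyFunLeft a b t - discrepancyFun a b t =
      ∑ i, ((if t - b i ∈ range ((↑) : ℤ → ℝ) then 1 else 0) -
        if t - a i ∈ range ((↑) : ℤ → ℝ) then 1 else 0) := by
  rw [discrepancyFunLeft, discrepancyFun, ← Finset.sum_sub_distrib]
  refine Finset.sum_congr rfl fun i _ => ?_
  linarith [ceil_sub_floor_eq (t - a i), ceil_sub_floor_eq (t - b i)]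

theorem sum_discrepancyFun_eq {ξ x : ℝ} (ha : ∀ i, 0 ≤ a i) (hab : ∀ i, a i ≤ b i)
    (hb : ∀ i, b i ≤ 1) (N : ℕ) :
    ∑ k ∈ Finset.range (N + 1), discrepancyFun a b (x + k * ξ) =
      ∑ i, localDisc ξ x (a i) (b i) N - ∑ i, (b i - a i) := by
  simp only [discrepancyFun, localDisc_eq]
  rw [Finset.sum_comm, ← Finset.sum_sub_distrib]
  refine Finset.sum_congr rfl fun i _ => ?_
  simp only [Finset.sum_sub_distrib, floor_sub_sub_floor_sub (ha i) (hab i) (hb i),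
    Finset.sum_boole, Finset.sum_const, Finset.card_range, nsmul_eq_mul]
  push_cast
  ring

end DiscrepancyFun

theorem abs_sum_discrepancyFun_le {ι : Type*} [Fintype ι] {a b : ι → ℝ} (ha : ∀ i, 0 ≤ a i)
    (hab : ∀ i, a i ≤ b i) (hb : ∀ i, b i ≤ 1) {ξ x C : ℝ}
    (hC : ∀ N, |∑ i, localDisc ξ x (a i) (b i) N| < C) (n : ℕ) :
    |∑ k ∈ Finset.range n, discrepancyFun a b (x + k * ξ)| ≤ C + |∑ i, (b i - a i)| := by
  cases n with
  | zero =>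
    simp only [Finset.range_zero, Finset.sum_empty, abs_zero]
    linarith [(abs_nonneg _).trans_lt (hC 0), abs_nonneg (∑ i, (b i - a i))]
  | succ N =>
    rw [sum_discrepancyFun_eq a b ha hab hb N]
    linarith [abs_sub (∑ i, localDisc ξ x (a i) (b i) N) (∑ i, (b i - a i)), hC N]

theorem card_fiber_endpoints_eq {ι : Type*} [Fintype ι] {a b : ι → ℝ} {ξ : ℝ} (hξ : Irrational ξ)
    (ha : ∀ i, 0 ≤ a i) (hab : ∀ i, a i ≤ b i) (hb : ∀ i, b i ≤ 1) {x C : ℝ}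
    (hC : ∀ N, |∑ i, localDisc ξ x (a i) (b i) N| < C) (q : ℝ ⧸ AddSubgroup.closure {ξ, 1}) :
    Fintype.card {i // (a i : ℝ ⧸ AddSubgroup.closure {ξ, 1}) = q} =
      Fintype.card {i // (b i : ℝ ⧸ AddSubgroup.closure {ξ, 1}) = q} := by
  obtain ⟨J, hJper, hJ, hJlim⟩ := (isPeriodicStep_discrepancyFun a b).exists_jump_eq_coboundary
    hξ (abs_sum_discrepancyFun_le ha hab hb hC)
  obtain ⟨e, rfl⟩ := QuotientAddGroup.mk_surjective q
  obtain ⟨e', n, he', hwin⟩ := exists_coset_window hξ ((finite_range a).union (finite_range b)) e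
  have hsum := sum_range_eq_zero_of_cocycle hξ hJper hJ hJlim e' n fun k hk => by
    rw [discrepancyFunLeft_sub_discrepancyFun]
    refine Finset.sum_eq_zero fun i _ => ?_
    have hout : ∀ c ∈ range a ∪ range b, e' + k * ξ - c ∉ range ((↑) : ℤ → ℝ) :=
      fun c hc hk' => by have := hwin c hc k hk'; omega
    rw [if_neg (hout _ (Or.inr ⟨i, rfl⟩)), if_neg (hout _ (Or.inl ⟨i, rfl⟩)), sub_zero]
  simp only [discrepancyFunLeft_sub_discrepancyFun] at hsum
  rw [Finset.sum_comm] at hsum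
  simp only [Finset.sum_sub_distrib, sum_range_indicator_eq hξ (hwin _ (Or.inl ⟨_, rfl⟩)),
    sum_range_indicator_eq hξ (hwin _ (Or.inr ⟨_, rfl⟩)), Finset.sum_boole] at hsum
  rw [← he', Fintype.card_subtype, Fintype.card_subtype]
  exact_mod_cast (sub_eq_zero.1 hsum).symm

theorem oren_necessity_general (ξ x : ℝ) (hξ : Irrational ξ) (L : ℕ) (a b : Fin L → ℝ)
    (ha : ∀ ℓ, 0 ≤ a ℓ) (hab : ∀ ℓ, a ℓ ≤ b ℓ) (hb : ∀ ℓ, b ℓ ≤ 1)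
    (hbd : ∃ C : ℝ, 0 < C ∧ ∀ N : ℕ, |∑ ℓ, localDisc ξ x (a ℓ) (b ℓ) N| < C) :
    ∃ σ : Equiv.Perm (Fin L), ∀ ℓ, ∃ k m : ℤ, b (σ ℓ) - a ℓ = k * ξ + m := by
  obtain ⟨C, -, hC⟩ := hbd
  let fiberEquiv := fun q => Fintype.equivOfCardEq (card_fiber_endpoints_eq hξ ha hab hb hC q)
  refine ⟨Equiv.ofFiberEquiv fiberEquiv, fun ℓ => ?_⟩
  obtain ⟨k, m, h⟩ := AddSubgroup.mem_closure_pair.1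
    (QuotientAddGroup.eq.1 (Equiv.ofFiberEquiv_map fiberEquiv ℓ).symm)
  refine ⟨k, m, ?_⟩
  simp only [zsmul_eq_mul, mul_one] at h
  linarith

/-- Oren's theorem, necessity direction: if the sum of the local discrepancies of
the disjoint intervals `[a ℓ, b ℓ)` is uniformly bounded, then there is a
permutation `σ` and integers `k ℓ` with `b (σ ℓ) - a ℓ ≡ (k ℓ) ξ (mod ℤ)`. -/
theorem oren_necessity (ξ x : ℝ) (hξ : Irrational ξ) (L : ℕ) (a b : Fin L → ℝ)
    (ha : ∀ ℓ, 0 ≤ a ℓ) (hab : ∀ ℓ, a ℓ ≤ b ℓ) (hb : ∀ ℓ, b ℓ ≤ 1)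
    (hdisj : Pairwise (fun ℓ ℓ' => Disjoint (Set.Ico (a ℓ) (b ℓ)) (Set.Ico (a ℓ') (b ℓ'))))
    (hbd : ∃ C : ℝ, 0 < C ∧ ∀ N : ℕ, |∑ ℓ, localDisc ξ x (a ℓ) (b ℓ) N| < C) :
    ∃ σ : Equiv.Perm (Fin L), ∀ ℓ, ∃ k m : ℤ, b (σ ℓ) - a ℓ = k * ξ + m :=
  oren_necessity_general ξ x hξ L a b ha hab hb hbd
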